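/- arXiv:2011.14718 — 5 statements merged into one kernel-verified Lean document; each statement's English description precedes it below -/
import Mathlib

section
/- Let X be a metric space, A ⊆ X a nonempty set and f : X → ℝ a function whose image f(A) is bounded below. Assume that for every x ∈ X the set {u x : u : X → ℝ metrically quasiconvex with u a ≤ f a for all a ∈ A} is bounded above. Then the quasiconvex envelope u⊛_f(x) = sSup {u x : u metrically quasiconvex and u ≤ f on A} is itself a metrically quasiconvex function on X. -/
/-- `z` lies (metrically) between `x` and `y`. -/
def Between {X : Type*} [MetricSpace X] (x z y : X) : Prop :=
  dist x z + dist z y = dist x y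

/-- A function on a metric space is metrically convex. -/
def MetricConvexFun {X : Type*} [MetricSpace X] (u : X → ℝ) : Prop :=
  ∀ x y : X, x ≠ y → ∀ z : X, Between x z y →
    u z ≤ (dist z y / dist x y) * u x + (dist x z / dist x y) * u y

/-- A function on a metric space is metrically quasiconvex. -/
def MetricQuasiconvexFun {X : Type*} [MetricSpace X] (u : X → ℝ) : Prop :=
  ∀ x y z : X, Between x z y → u z ≤ max (u x) (u y)

/-- A subset of a metric space is metrically convex. -/
def MetricConvexSet {X : Type*} [MetricSpace X] (S : Set X) : Prop :=
  ∀ x ∈ S, ∀ y ∈ S, ∀ z : X, Between x z y → z ∈ S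

theorem quasiconvexEnvelope_metricQuasiconvex {X : Type*} [MetricSpace X]
    (A : Set X) (hA : A.Nonempty) (f : X → ℝ) (hf : BddBelow (f '' A))
    (hbdd : ∀ x : X, BddAbove
      {y : ℝ | ∃ u : X → ℝ, MetricQuasiconvexFun u ∧ (∀ a ∈ A, u a ≤ f a) ∧ u x = y}) :
    MetricQuasiconvexFun (fun x =>
      sSup {y : ℝ | ∃ u : X → ℝ, MetricQuasiconvexFun u ∧ (∀ a ∈ A, u a ≤ f a) ∧ u x = y}) := by
  intro x y z hz
  have hne : ∀ w : X,
      ({y : ℝ | ∃ u : X → ℝ, MetricQuasiconvexFun u ∧ (∀ a ∈ A, u a ≤ f a) ∧ u w = y}).Nonempty := by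
    intro w
    obtain ⟨m, hm⟩ := hf
    refine ⟨m, fun _ => m, fun _ _ _ _ => by simp, fun a ha => hm ⟨a, ha, rfl⟩, rfl⟩
  refine csSup_le (hne z) ?_
  intro v hv
  obtain ⟨u, hu, hua, rfl⟩ := hv
  calc u z ≤ max (u x) (u y) := hu x y z hz
    _ ≤ max (sSup _) (sSup _) :=
      max_le_max (le_csSup (hbdd x) ⟨u, hu, hua, rfl⟩) (le_csSup (hbdd y) ⟨u, hu, hua, rfl⟩)
end

section
/- Let p : ℝ with p > 0, and consider the circle AddCircle p = ℝ / (p ℤ) equipped with its standard quotient metric (induced by the quotient norm of the real line by the discrete subgroup of multiples of p). Then every metrically convex function u : AddCircle p → ℝ is constant. -/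
/-
Translation by half a period is an isometric involution `σ` of `AddCircle p` for which every
point `z` lies between any `x` and its antipode `σ x`. Convexity on the pair `x, σ x`, applied
at `z` and at `σ z` and added, shows that `u z + u (σ z)` does not depend on `z`; hence both
inequalities are equalities, and `u z` depends only on `dist x z`, for every `x`. So `u` is
invariant under each reflection `z ↦ 2 m - z` of the circle, and any two points are exchanged
by one of them.
-/

open Function

section Antipodal

variable {X : Type*} [MetricSpace X] {u : X → ℝ}

theorem MetricConvexFun.dist_mul_le (hu : MetricConvexFun u) {x y z : X} (hxy : x ≠ y)
    (hz : Between x z y) : dist x y * u z ≤ dist z y * u x + dist x z * u y := by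
  have h := hu x y hxy z hz
  rwa [div_mul_eq_mul_div, div_mul_eq_mul_div, ← add_div, le_div_iff₀ (dist_pos.2 hxy),
    mul_comm] at h

variable {σ : X → X} (hσ : Isometry σ) (hinv : Involutive σ) (hne : ∀ x, x ≠ σ x)
  (hbtw : ∀ x z, Between x z (σ x))
include hσ hinv hne hbtw

theorem MetricConvexFun.dist_mul_apply_antipode_le (hu : MetricConvexFun u) (x z : X) :
    dist x (σ x) * u (σ z) ≤ dist x z * u x + dist z (σ x) * u (σ x) := by
  have h₁ : dist (σ z) (σ x) = dist x z := by rw [hσ.dist_eq, dist_comm]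
  have h₂ : dist x (σ z) = dist z (σ x) := by rw [← hσ.dist_eq, hinv z, dist_comm]
  simpa only [h₁, h₂] using hu.dist_mul_le (hne x) (hbtw x (σ z))

theorem MetricConvexFun.apply_add_apply_antipode_le (hu : MetricConvexFun u) (x z : X) :
    u z + u (σ z) ≤ u x + u (σ x) := by
  have h₁ := hu.dist_mul_le (hne x) (hbtw x z)
  have h₂ := hu.dist_mul_apply_antipode_le hσ hinv hne hbtw x z
  have hsum : dist x z + dist z (σ x) = dist x (σ x) := hbtw x z
  refine le_of_mul_le_mul_left ?_ (dist_pos.2 (hne x))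
  linear_combination h₁ + h₂ + (u x + u (σ x)) * hsum

theorem MetricConvexFun.dist_mul_eq_of_antipode (hu : MetricConvexFun u) (x z : X) :
    dist x (σ x) * u z = dist z (σ x) * u x + dist x z * u (σ x) := by
  have h₂ := hu.dist_mul_apply_antipode_le hσ hinv hne hbtw x z
  have hsum : dist x z + dist z (σ x) = dist x (σ x) := hbtw x z
  have hS : u z + u (σ z) = u x + u (σ x) :=
    (hu.apply_add_apply_antipode_le hσ hinv hne hbtw x z).antisymm
      (hu.apply_add_apply_antipode_le hσ hinv hne hbtw z x)
  refine (hu.dist_mul_le (hne x) (hbtw x z)).antisymm ?_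
  linear_combination h₂ - dist x (σ x) * hS + (u x + u (σ x)) * hsum

theorem MetricConvexFun.eq_of_dist_eq (hu : MetricConvexFun u) {x z w : X}
    (h : dist x z = dist x w) : u z = u w := by
  have hz := hu.dist_mul_eq_of_antipode hσ hinv hne hbtw x z
  have hw := hu.dist_mul_eq_of_antipode hσ hinv hne hbtw x w
  have hz' : dist z (σ x) = dist w (σ x) := by
    have : dist x z + dist z (σ x) = dist x w + dist w (σ x) := (hbtw x z).trans (hbtw x w).symm
    linarith
  rw [h, hz', ← hw] at hz
  exact mul_left_cancel₀ (dist_pos.2 (hne x)).ne' hz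

end Antipodal

theorem abs_sub_round_add_abs_sub_round_add_half (t : ℝ) :
    |t - round t| + |t + 1 / 2 - round (t + 1 / 2)| = 1 / 2 := by
  rw [round_eq, round_eq, add_assoc, add_halves, Int.floor_add_one]
  have h₁ := Int.floor_le t
  have h₂ := Int.lt_floor_add_one t
  have h₃ := Int.floor_le (t + 1 / 2)
  have h₄ := Int.lt_floor_add_one (t + 1 / 2)
  have hfloor : ⌊t + 1 / 2⌋ = ⌊t⌋ ∨ ⌊t + 1 / 2⌋ = ⌊t⌋ + 1 := by
    have : ⌊t⌋ ≤ ⌊t + 1 / 2⌋ := Int.floor_mono (by linarith)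
    have : ⌊t + 1 / 2⌋ ≤ ⌊t⌋ + 1 := by
      rw [← Int.floor_add_one]
      exact Int.floor_mono (by linarith)
    omega
  rcases hfloor with h | h <;> rw [h] at h₃ h₄ ⊢ <;> push_cast at *
  · rw [abs_of_nonneg (by linarith), abs_of_nonpos (by linarith)]; ring
  · rw [abs_of_nonpos (by linarith), abs_of_nonneg (by linarith)]; ring

namespace AddCircle

variable (p : ℝ)

theorem half_period_add_half_period : (↑(p / 2) + ↑(p / 2) : AddCircle p) = 0 := by
  rw [← coe_add, add_halves, coe_period]

theorem neg_half_period : -(↑(p / 2) : AddCircle p) = ↑(p / 2) :=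
  neg_eq_of_add_eq_zero_left (half_period_add_half_period p)

theorem add_half_period_involutive : Involutive (· + (↑(p / 2) : AddCircle p)) :=
  fun a => by simp only [add_assoc, half_period_add_half_period, add_zero]

variable [hp : Fact (0 < p)]

theorem norm_add_norm_add_half_period (a : AddCircle p) : ‖a‖ + ‖a + ↑(p / 2)‖ = p / 2 := by
  induction a using QuotientAddGroup.induction_on with
  | H t =>
    have hscale : p⁻¹ * (t + p / 2) = p⁻¹ * t + 1 / 2 := by
      rw [mul_add, mul_div_assoc', inv_mul_cancel₀ hp.out.ne']
    rw [← coe_add, norm_eq' p hp.out, norm_eq' p hp.out, hscale, ← mul_add,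
      abs_sub_round_add_abs_sub_round_add_half]
    ring

theorem ne_add_half_period (a : AddCircle p) : a ≠ a + ↑(p / 2) := by
  rw [Ne, left_eq_add, ← norm_eq_zero, norm_half_period_eq, abs_of_pos hp.out]
  exact (half_pos hp.out).ne'

theorem between_add_half_period (x z : AddCircle p) : Between x z (x + ↑(p / 2)) := by
  unfold Between
  rw [dist_self_add_right, norm_half_period_eq, abs_of_pos hp.out, dist_comm, dist_eq_norm,
    dist_eq_norm, sub_add_eq_sub_sub, sub_eq_add_neg _ (↑(p / 2) : AddCircle p), neg_half_period]
  exact norm_add_norm_add_half_period p (z - x)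

end AddCircle

theorem metricConvex_on_addCircle_constant (p : ℝ) [hp : Fact (0 < p)]
    (u : AddCircle p → ℝ) (hu : MetricConvexFun u) :
    ∀ x y : AddCircle p, u x = u y := by
  have hreflect : ∀ m v : AddCircle p, u (m + v) = u (m - v) := fun m v =>
    hu.eq_of_dist_eq (isometry_add_right _) (AddCircle.add_half_period_involutive p)
      (AddCircle.ne_add_half_period p) (AddCircle.between_add_half_period p)
      (by rw [dist_self_add_right, dist_self_sub_right])
  intro x y
  obtain ⟨m, hm⟩ : ∃ m : AddCircle p, m + m = x + y :=
    ⟨DivisibleBy.div (x + y) (2 : ℤ), by rw [← two_zsmul, DivisibleBy.div_cancel _ two_ne_zero]⟩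
  calc u x = u (m + (x - m)) := by rw [add_sub_cancel]
    _ = u (m - (x - m)) := hreflect m (x - m)
    _ = u y := by rw [sub_sub_eq_add_sub, hm, add_sub_cancel_left]
end

section
/- Let a < b be real numbers and let u : ℝ → ℝ be convex on the open interval (a,b) (ConvexOn ℝ (Ioo a b) u). Let x₀ ∈ (a,b), δ > 0 with (x₀ - δ, x₀ + δ) ⊆ (a,b), and let φ : ℝ → ℝ be twice continuously differentiable (ContDiff ℝ 2 φ) with φ x₀ = u x₀ and u x ≤ φ x for all x ∈ (x₀ - δ, x₀ + δ). Then the second derivative satisfies deriv (deriv φ) x₀ ≥ 0. (A convex function is a viscosity subsolution of u'' = 0.) -/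
/-!
Reflecting about `x₀`, the convexity inequality `2 u x₀ ≤ u (x₀ + t) + u (x₀ - t)` together with
`u ≤ φ` and `φ x₀ = u x₀` says that `t ↦ φ (x₀ + t) + φ (x₀ - t)` has a local minimum at `0`.
Its second derivative there, `2 φ'' x₀`, is therefore nonnegative.
-/

open Filter Topology

theorem IsLocalMin.deriv_deriv_nonneg {f : ℝ → ℝ} {x : ℝ} (h : IsLocalMin f x)
    (hf : ∀ᶠ y in 𝓝 x, DifferentiableAt ℝ f y) : 0 ≤ deriv (deriv f) x := by
  by_contra! hneg
  set c := deriv (deriv f) x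
  -- If `f'' x = c < 0`, then `k` still has `k'' x < 0`, so `k ≤ k x = f x ≤ f` near `x`,
  -- which forces `(y - x) ^ 2 ≤ 0` near `x`.
  set k : ℝ → ℝ := fun y ↦ f y - c / 4 * (y - x) ^ 2
  have hk' : deriv k =ᶠ[𝓝 x] fun y ↦ deriv f y - c / 2 * (y - x) := by
    filter_upwards [hf] with y hy
    have hq : HasDerivAt (fun y ↦ c / 4 * (y - x) ^ 2) (c / 2 * (y - x)) y :=
      (((hasDerivAt_id y).sub_const x).fun_pow 2).const_mul (c / 4) |>.congr_deriv (by simp; ring)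
    exact (hy.hasDerivAt.sub hq).deriv
  have hk'' : deriv (deriv k) x = c / 2 := by
    have hq : HasDerivAt (fun y ↦ c / 2 * (y - x)) (c / 2) x := by
      simpa using ((hasDerivAt_id x).sub_const x).const_mul (c / 2)
    rw [hk'.deriv_eq, ((differentiableAt_of_deriv_ne_zero hneg.ne).hasDerivAt.fun_sub hq).deriv]
    ring
  have hkmax : IsLocalMax k x :=
    isLocalMax_of_deriv_deriv_neg (by linarith) (by simp [hk'.eq_of_nhds, h.deriv_eq_zero])
      (hf.self_of_nhds.continuousAt.sub (by fun_prop))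
  have hcenter : ∀ᶠ y in 𝓝 x, y = x := by
    filter_upwards [h, hkmax] with y hmin hmax
    simp only [k, sub_self] at hmax
    have hsq : (y - x) ^ 2 ≤ 0 := by nlinarith
    exact sub_eq_zero.mp (pow_eq_zero_iff two_ne_zero |>.mp (le_antisymm hsq (sq_nonneg _)))
  obtain ⟨y, hyx, hne⟩ := ((hcenter.filter_mono nhdsWithin_le_nhds).and
    (self_mem_nhdsWithin (s := {x}ᶜ))).exists
  exact hne hyx

theorem ConvexOn.isLocalMin_add_comp_sub_of_le {s : Set ℝ} {u φ : ℝ → ℝ} {x₀ : ℝ}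
    (hu : ConvexOn ℝ s u) (hs : s ∈ 𝓝 x₀) (hle : ∀ x ∈ s, u x ≤ φ x) (heq : φ x₀ = u x₀) :
    IsLocalMin (fun t ↦ φ (x₀ + t) + φ (x₀ - t)) 0 := by
  have hplus : ∀ᶠ t in 𝓝 (0 : ℝ), x₀ + t ∈ s :=
    ((continuous_const.add continuous_id).tendsto' 0 x₀ (by simp)).eventually hs
  have hminus : ∀ᶠ t in 𝓝 (0 : ℝ), x₀ - t ∈ s :=
    ((continuous_const.sub continuous_id).tendsto' 0 x₀ (by simp)).eventually hs
  filter_upwards [hplus, hminus] with t hp hm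
  have hmid := hu.2 hp hm (by norm_num) (by norm_num) (add_halves (1 : ℝ))
  have hx₀ : (1 / 2 : ℝ) • (x₀ + t) + (1 / 2 : ℝ) • (x₀ - t) = x₀ := by
    simp only [smul_eq_mul]; ring
  rw [hx₀, smul_eq_mul, smul_eq_mul] at hmid
  simp only [add_zero, sub_zero]
  linarith [hle _ hp, hle _ hm]

theorem deriv_deriv_add_comp_sub {φ : ℝ → ℝ} {x₀ : ℝ} (hφ : Differentiable ℝ φ)
    (hφ' : DifferentiableAt ℝ (deriv φ) x₀) :
    deriv (deriv fun t ↦ φ (x₀ + t) + φ (x₀ - t)) 0 = 2 * deriv (deriv φ) x₀ := by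
  have hg : deriv (fun t ↦ φ (x₀ + t) + φ (x₀ - t)) =
      fun t ↦ deriv φ (x₀ + t) - deriv φ (x₀ - t) := by
    funext t
    exact (((hφ _).hasDerivAt.comp_const_add x₀ t).add
      ((hφ _).hasDerivAt.comp_const_sub x₀ t)).deriv
  have hplus := HasDerivAt.comp_const_add (f := deriv φ) x₀ 0
    (by rw [add_zero]; exact hφ'.hasDerivAt)
  have hminus := HasDerivAt.comp_const_sub (f := deriv φ) x₀ 0
    (by rw [sub_zero]; exact hφ'.hasDerivAt)
  rw [hg, (hplus.fun_sub hminus).deriv]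
  ring

theorem convex_is_viscosity_subsolution_general (a b : ℝ) (u : ℝ → ℝ)
    (hu : ConvexOn ℝ (Set.Ioo a b) u) (x₀ δ : ℝ)
    (hδ : 0 < δ) (hsub : Set.Ioo (x₀ - δ) (x₀ + δ) ⊆ Set.Ioo a b)
    (φ : ℝ → ℝ) (hφ : ContDiff ℝ 2 φ) (htouch : φ x₀ = u x₀)
    (habove : ∀ x ∈ Set.Ioo (x₀ - δ) (x₀ + δ), u x ≤ φ x) :
    0 ≤ deriv (deriv φ) x₀ := by
  have hφ₁ : Differentiable ℝ φ := hφ.differentiable (by norm_num)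
  have hφ₂ : Differentiable ℝ (deriv φ) := (hφ.iterate_deriv' 1 1).differentiable (by norm_num)
  have hmin := (hu.subset hsub (convex_Ioo _ _)).isLocalMin_add_comp_sub_of_le
    (Ioo_mem_nhds (by linarith) (by linarith)) habove htouch
  have hsecond := hmin.deriv_deriv_nonneg (Eventually.of_forall fun t ↦ by fun_prop)
  rw [deriv_deriv_add_comp_sub hφ₁ (hφ₂ x₀)] at hsecond
  linarith

theorem convex_is_viscosity_subsolution (a b : ℝ) (hab : a < b) (u : ℝ → ℝ)
    (hu : ConvexOn ℝ (Set.Ioo a b) u) (x₀ δ : ℝ) (hx₀ : x₀ ∈ Set.Ioo a b)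
    (hδ : 0 < δ) (hsub : Set.Ioo (x₀ - δ) (x₀ + δ) ⊆ Set.Ioo a b)
    (φ : ℝ → ℝ) (hφ : ContDiff ℝ 2 φ) (htouch : φ x₀ = u x₀)
    (habove : ∀ x ∈ Set.Ioo (x₀ - δ) (x₀ + δ), u x ≤ φ x) :
    0 ≤ deriv (deriv φ) x₀ :=
  convex_is_viscosity_subsolution_general a b u hu x₀ δ hδ hsub φ hφ htouch habove
end

section
/- Let a < b be real numbers and let u : ℝ → ℝ be upper semicontinuous on [a,b] (UpperSemicontinuousOn u (Icc a b)). Suppose u satisfies the viscosity subsolution property for u'' = 0 in (a,b): for every x₀ ∈ (a,b), every δ > 0 and every twice continuously differentiable φ : ℝ → ℝ (ContDiff ℝ 2 φ) with φ x₀ = u x₀ and u x ≤ φ x for all x ∈ (x₀ - δ, x₀ + δ), one has deriv (deriv φ) x₀ ≥ 0. Then u is convex on [a,b], i.e. ConvexOn ℝ (Icc a b) u. -/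
/-!
Convexity follows from a comparison principle: a viscosity subsolution lying below a `C²` function
`ψ` with `ψ'' ≤ 0` at the endpoints of `[p, q]` stays below it on all of `[p, q]`. Otherwise the
maximum of the upper semicontinuous function `u - ψ + ε (t - p) (t - q)`, for small `ε > 0`, is
positive and hence attained inside `(p, q)`, where `ψ - ε (t - p) (t - q)` touches `u` from above
with second derivative `ψ'' - 2ε < 0`. Applied to chords, this is convexity.
-/

open Set

/-- `u` is a viscosity subsolution of `u'' = 0` on `s`. -/
def ViscositySubsolutionOn (u : ℝ → ℝ) (s : Set ℝ) : Prop :=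
  ∀ x₀ ∈ s, ∀ δ : ℝ, 0 < δ → ∀ φ : ℝ → ℝ, ContDiff ℝ 2 φ →
    φ x₀ = u x₀ → (∀ x ∈ Ioo (x₀ - δ) (x₀ + δ), u x ≤ φ x) → 0 ≤ deriv (deriv φ) x₀

theorem deriv_deriv_sub_mul_sub_mul_sub {ψ : ℝ → ℝ} (hψ : ContDiff ℝ 2 ψ) (ε p q x : ℝ) :
    deriv (deriv fun t => ψ t - ε * ((t - p) * (t - q))) x = deriv (deriv ψ) x - 2 * ε := by
  have hquad (t : ℝ) : HasDerivAt (fun t => ε * ((t - p) * (t - q))) (ε * (2 * t - p - q)) t :=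
    ((((hasDerivAt_id' t).sub_const p).mul ((hasDerivAt_id' t).sub_const q)).const_mul
      ε).congr_deriv (by ring)
  have hderiv : deriv (fun t => ψ t - ε * ((t - p) * (t - q))) =
      fun t => deriv ψ t - ε * (2 * t - p - q) :=
    funext fun t => ((hψ.differentiable two_ne_zero t).hasDerivAt.sub (hquad t)).deriv
  rw [hderiv]
  have hlin : HasDerivAt (fun t => ε * (2 * t - p - q)) (2 * ε) x :=
    ((((hasDerivAt_id' x).const_mul 2).sub_const p).sub_const q).const_mul ε
      |>.congr_deriv (by ring)
  exact ((hψ.differentiable_deriv_two x).hasDerivAt.sub hlin).deriv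

namespace ViscositySubsolutionOn

variable {u : ℝ → ℝ} {s : Set ℝ}

theorem mono {t : Set ℝ} (hu : ViscositySubsolutionOn u s) (hts : t ⊆ s) :
    ViscositySubsolutionOn u t :=
  fun x₀ hx₀ => hu x₀ (hts hx₀)

theorem deriv_deriv_nonneg_of_isLocalMax (hu : ViscositySubsolutionOn u s) {x₀ : ℝ} (hx₀ : x₀ ∈ s)
    {φ : ℝ → ℝ} (hφ : ContDiff ℝ 2 φ) (hmax : IsLocalMax (fun x => u x - φ x) x₀) :
    0 ≤ deriv (deriv φ) x₀ := by
  obtain ⟨δ, hδ, hball⟩ := Metric.eventually_nhds_iff_ball.1 hmax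
  have hle (x : ℝ) (hx : x ∈ Ioo (x₀ - δ) (x₀ + δ)) : u x ≤ φ x + (u x₀ - φ x₀) := by
    have := hball x (by rwa [Real.ball_eq_Ioo])
    linarith
  simpa only [deriv_add_const'] using
    hu x₀ hx₀ δ hδ _ (hφ.add contDiff_const) (by ring) hle

theorem le_on_Icc_of_le_endpoints {p q : ℝ} (hu : ViscositySubsolutionOn u (Ioo p q))
    (husc : UpperSemicontinuousOn u (Icc p q)) {ψ : ℝ → ℝ} (hψ : ContDiff ℝ 2 ψ)
    (hψ'' : ∀ x ∈ Ioo p q, deriv (deriv ψ) x ≤ 0) (hp : u p ≤ ψ p) (hq : u q ≤ ψ q) :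
    ∀ x ∈ Icc p q, u x ≤ ψ x := by
  intro z hz
  by_contra! hψz
  obtain ⟨ε, hε, hεz⟩ : ∃ ε > 0, ε * (q - p) ^ 2 < u z - ψ z :=
    ⟨(u z - ψ z) / (1 + (q - p) ^ 2), div_pos (by linarith) (by positivity), by
      rw [div_mul_eq_mul_div, div_lt_iff₀ (by positivity)]; nlinarith⟩
  set φ : ℝ → ℝ := fun t => ψ t - ε * ((t - p) * (t - q)) with hφ_def
  have hφ : ContDiff ℝ 2 φ := by fun_prop
  have hgusc : UpperSemicontinuousOn (fun t => u t - φ t) (Icc p q) := by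
    have := husc.add hφ.continuous.neg.continuousOn.upperSemicontinuousOn
    simpa only [sub_eq_add_neg, Pi.neg_apply] using this
  obtain ⟨t₀, ht₀, hmax⟩ := hgusc.exists_isMaxOn ⟨z, hz⟩ isCompact_Icc
  have hgz : 0 < u z - φ z := by
    have : -(q - p) ^ 2 ≤ (z - p) * (z - q) := by nlinarith [hz.1, hz.2]
    simp only [hφ_def]; nlinarith
  have hgp : u p - φ p ≤ 0 := by simpa [hφ_def] using hp
  have hgq : u q - φ q ≤ 0 := by simpa [hφ_def] using hq
  have hgt₀ : 0 < u t₀ - φ t₀ := hgz.trans_le (hmax hz)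
  have ht₀' : t₀ ∈ Ioo p q :=
    ⟨ht₀.1.lt_of_ne (by rintro rfl; linarith), ht₀.2.lt_of_ne (by rintro rfl; linarith)⟩
  have := hu.deriv_deriv_nonneg_of_isLocalMax ht₀' hφ (hmax.isLocalMax (Icc_mem_nhds ht₀'.1 ht₀'.2))
  rw [deriv_deriv_sub_mul_sub_mul_sub hψ] at this
  linarith [hψ'' t₀ ht₀']

end ViscositySubsolutionOn

theorem viscosity_subsolution_is_convex_general (a b : ℝ) (u : ℝ → ℝ)
    (husc : UpperSemicontinuousOn u (Set.Icc a b))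
    (hvisc : ∀ x₀ ∈ Set.Ioo a b, ∀ δ : ℝ, 0 < δ → ∀ φ : ℝ → ℝ, ContDiff ℝ 2 φ →
      φ x₀ = u x₀ → (∀ x ∈ Set.Ioo (x₀ - δ) (x₀ + δ), u x ≤ φ x) →
      0 ≤ deriv (deriv φ) x₀) :
    ConvexOn ℝ (Set.Icc a b) u := by
  refine convexOn_of_slope_mono_adjacent (convex_Icc a b) fun {x y z} hx hz hxy hyz => ?_
  have hmz : u x + (u z - u x) / (z - x) * (z - x) = u z := by
    rw [div_mul_cancel₀ _ (by linarith)]; ring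
  set m := (u z - u x) / (z - x)
  have hxz : ViscositySubsolutionOn u (Ioo x z) :=
    ViscositySubsolutionOn.mono hvisc (Ioo_subset_Ioo hx.1 hz.2)
  have hy : u y ≤ u x + m * (y - x) :=
    hxz.le_on_Icc_of_le_endpoints (husc.mono (Icc_subset_Icc hx.1 hz.2))
      (ψ := fun t => u x + m * (t - x)) (by fun_prop) (fun _ _ => by simp) (by simp) (by rw [hmz])
      y ⟨hxy.le, hyz.le⟩
  calc (u y - u x) / (y - x) ≤ m := by rw [div_le_iff₀ (by linarith)]; linarith
    _ ≤ (u z - u y) / (z - y) := by rw [le_div_iff₀ (by linarith)]; linarith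

theorem viscosity_subsolution_is_convex (a b : ℝ) (hab : a < b) (u : ℝ → ℝ)
    (husc : UpperSemicontinuousOn u (Set.Icc a b))
    (hvisc : ∀ x₀ ∈ Set.Ioo a b, ∀ δ : ℝ, 0 < δ → ∀ φ : ℝ → ℝ, ContDiff ℝ 2 φ →
      φ x₀ = u x₀ → (∀ x ∈ Set.Ioo (x₀ - δ) (x₀ + δ), u x ≤ φ x) →
      0 ≤ deriv (deriv φ) x₀) :
    ConvexOn ℝ (Set.Icc a b) u :=
  viscosity_subsolution_is_convex_general a b u husc hvisc
end

section
/- Let X be a metric space, A ⊆ X a nonempty set, and f : X → ℝ with f(A) bounded above and bounded below. Suppose that every point of X belongs to every metrically convex subset of X containing A (i.e. the metric convex hull of A is all of X). Then for every x ∈ X the defining set of the quasiconvex envelope is bounded above and sInf (f '' A) ≤ u⊛_f(x) ≤ sSup (f '' A). -/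
theorem quasiconvexEnvelope_bounds {X : Type*} [MetricSpace X]
    (A : Set X) (hA : A.Nonempty) (f : X → ℝ)
    (hfub : BddAbove (f '' A)) (hflb : BddBelow (f '' A))
    (hhull : ∀ x : X, ∀ S : Set X, MetricConvexSet S → A ⊆ S → x ∈ S) :
    ∀ x : X,
      BddAbove {y : ℝ | ∃ u : X → ℝ, MetricQuasiconvexFun u ∧ (∀ a ∈ A, u a ≤ f a) ∧ u x = y} ∧
      sInf (f '' A) ≤
        sSup {y : ℝ | ∃ u : X → ℝ, MetricQuasiconvexFun u ∧ (∀ a ∈ A, u a ≤ f a) ∧ u x = y} ∧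
      sSup {y : ℝ | ∃ u : X → ℝ, MetricQuasiconvexFun u ∧ (∀ a ∈ A, u a ≤ f a) ∧ u x = y} ≤
        sSup (f '' A) := by
  intro x
  set M := sSup (f '' A) with hM
  set m := sInf (f '' A) with hm
  -- every member of the set is ≤ M
  have key : ∀ y ∈ {y : ℝ | ∃ u : X → ℝ, MetricQuasiconvexFun u ∧ (∀ a ∈ A, u a ≤ f a) ∧ u x = y},
      y ≤ M := by
    rintro y ⟨u, hu, huf, rfl⟩
    have hS : MetricConvexSet {z : X | u z ≤ M} := by
      intro a ha b hb z hz
      exact le_trans (hu a b z hz) (max_le ha hb)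
    have hAS : A ⊆ {z : X | u z ≤ M} := fun a ha =>
      le_trans (huf a ha) (le_csSup hfub ⟨a, ha, rfl⟩)
    exact hhull x _ hS hAS
  have hbdd : BddAbove {y : ℝ | ∃ u : X → ℝ, MetricQuasiconvexFun u ∧ (∀ a ∈ A, u a ≤ f a) ∧ u x = y} :=
    ⟨M, key⟩
  have hmem : m ∈ {y : ℝ | ∃ u : X → ℝ, MetricQuasiconvexFun u ∧ (∀ a ∈ A, u a ≤ f a) ∧ u x = y} := by
    refine ⟨fun _ => m, ?_, ?_, rfl⟩
    · intro a b z _; simp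
    · intro a ha; exact csInf_le hflb ⟨a, ha, rfl⟩
  exact ⟨hbdd, le_csSup hbdd hmem, csSup_le ⟨m, hmem⟩ key⟩
end
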